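/- arXiv:math/0607410 — 2 statements merged into one kernel-verified Lean document; each statement's English description precedes it below -/
import Mathlib

section
/- Hyperdeterminantal representation of Selberg's integral: Let n ≥ 1 and k ≥ 1 be integers and a, b > 0 real. Then 𝒮_n(a,b;k) = n! · Det(S), where S is the hypermatrix of order 2k and dimension n with entries S(i₁,…,i_{2k}) = B(a + i₁+⋯+i_{2k}, b) for indices i₁,…,i_{2k} ∈ {0,…,n−1}. -/
open MeasureTheory Nat

/-- The Vandermonde product `Δ(x) = ∏_{i<j} (x_j - x_i)`. -/
def vandermonde {n : ℕ} (x : Fin n → ℝ) : ℝ :=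
  ∏ p ∈ Finset.univ.filter (fun p : Fin n × Fin n => p.1 < p.2), (x p.2 - x p.1)

/-- Selberg's integral `𝒮ₙ(a,b;k)` for integer exponent `k`. -/
noncomputable def selberg (n k : ℕ) (a b : ℝ) : ℝ :=
  ∫ x : Fin n → ℝ in Set.univ.pi (fun _ => Set.Icc (0:ℝ) 1),
    vandermonde x ^ (2 * k) * ∏ i, x i ^ (a - 1) * (1 - x i) ^ (b - 1)

/-- The Euler Beta function `B(a,b) = ∫₀¹ x^{a-1} (1-x)^{b-1} dx`. -/
noncomputable def betaFn (a b : ℝ) : ℝ :=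
  ∫ x in (0:ℝ)..1, x ^ (a - 1) * (1 - x) ^ (b - 1)

/-- The hyperdeterminant of a hypermatrix of order `m` and dimension `n`. -/
noncomputable def hypDet {m n : ℕ} (M : (Fin m → Fin n) → ℝ) : ℝ :=
  (1 / (n ! : ℝ)) * ∑ σ : Fin m → Equiv.Perm (Fin n),
    (∏ s, ((Equiv.Perm.sign (σ s) : ℤ) : ℝ)) * ∏ i, M fun s => σ s i

/-!
Writing `Δ(x)` as the Vandermonde determinant `∑_τ sign τ ∏ᵢ xᵢ ^ τ(i)`, the power `Δ(x) ^ 2k`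
expands into a signed sum, over `2k`-tuples `σ` of permutations, of the monomials
`∏ᵢ xᵢ ^ (σ₁(i) + ⋯ + σ₂ₖ(i))`. Against the product weight `∏ᵢ xᵢ^(a-1) (1-xᵢ)^(b-1)` each monomial
integrates coordinatewise (Fubini) to `∏ᵢ B(a + σ₁(i) + ⋯ + σ₂ₖ(i), b)`, and the signed sum of these
products is `n!` times the hyperdeterminant of `S`.
-/

open Finset

theorem vandermonde_eq_sum_sign_mul_prod_pow {n : ℕ} (x : Fin n → ℝ) :
    vandermonde x = ∑ τ : Equiv.Perm (Fin n), (Equiv.Perm.sign τ : ℝ) * ∏ i, x i ^ (τ i : ℕ) := by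
  have hdet : vandermonde x = (Matrix.vandermonde x).transpose.det := by
    rw [Matrix.det_transpose, Matrix.det_vandermonde, vandermonde]
    exact prod_finset_product' _ univ (fun i => Ioi i) (fun p => by simp)
      (f := fun i j => x j - x i)
  rw [hdet, Matrix.det_apply']
  simp [Matrix.vandermonde]

theorem vandermonde_pow_eq_sum {n : ℕ} (x : Fin n → ℝ) (m : ℕ) :
    vandermonde x ^ m = ∑ σ : Fin m → Equiv.Perm (Fin n),
      (∏ s, (Equiv.Perm.sign (σ s) : ℝ)) * ∏ i, x i ^ ∑ s, (σ s i : ℕ) := by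
  rw [vandermonde_eq_sum_sign_mul_prod_pow, ← Fin.prod_const, prod_univ_sum]
  refine sum_congr rfl fun σ _ => ?_
  rw [prod_mul_distrib, prod_comm]
  simp only [prod_pow_eq_pow_sum]

theorem setIntegral_univ_pi_prod {ι E 𝕜 : Type*} [Fintype ι] [RCLike 𝕜] [MeasureSpace E]
    [SigmaFinite (volume : Measure E)] (s : ι → Set E) (f : ι → E → 𝕜) :
    ∫ x in Set.univ.pi s, ∏ i, f i (x i) = ∏ i, ∫ t in s i, f i t := by
  rw [volume_pi, Measure.restrict_pi_pi, integral_fintype_prod_eq_prod]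

theorem IntegrableOn.univ_pi_prod {ι E 𝕜 : Type*} [Fintype ι] [RCLike 𝕜] [MeasureSpace E]
    [SigmaFinite (volume : Measure E)] {s : ι → Set E} {f : ι → E → 𝕜}
    (hf : ∀ i, IntegrableOn (f i) (s i)) :
    IntegrableOn (fun x : ι → E => ∏ i, f i (x i)) (Set.univ.pi s) := by
  rw [IntegrableOn, volume_pi, Measure.restrict_pi_pi]
  exact Integrable.fintype_prod_dep hf

noncomputable def betaWeight (a b t : ℝ) : ℝ := t ^ (a - 1) * (1 - t) ^ (b - 1)

theorem integrableOn_betaWeight {a b : ℝ} (ha : 0 < a) (hb : 0 < b) :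
    IntegrableOn (betaWeight a b) (Set.Ioc 0 1) := by
  have hconv := Complex.betaIntegral_convergent (u := a) (v := b)
    (by simpa using ha) (by simpa using hb)
  rw [intervalIntegrable_iff_integrableOn_Ioc_of_le zero_le_one] at hconv
  have hre : IntegrableOn
      (fun t : ℝ => ((t : ℂ) ^ ((a : ℂ) - 1) * (1 - (t : ℂ)) ^ ((b : ℂ) - 1)).re)
      (Set.Ioc 0 1) := hconv.re
  refine hre.congr_fun (fun t ht => ?_) measurableSet_Ioc
  have hpow : ∀ {x : ℝ}, 0 ≤ x → ∀ c : ℝ, (x : ℂ) ^ ((c : ℂ) - 1) = ((x ^ (c - 1) : ℝ) : ℂ) :=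
    fun hx c => by rw [Complex.ofReal_cpow hx]; push_cast; rfl
  have h1 : (0 : ℝ) ≤ 1 - t := by linarith [ht.2]
  simp only [betaWeight]
  rw [hpow ht.1.le, show (1 : ℂ) - t = ((1 - t : ℝ) : ℂ) by push_cast; rfl, hpow h1,
    ← Complex.ofReal_mul, Complex.ofReal_re]

theorem pow_mul_betaWeight_eqOn (a b : ℝ) (e : ℕ) :
    Set.EqOn (fun t => t ^ e * betaWeight a b t) (betaWeight (a + e) b) (Set.Ioc 0 1) := by
  intro t ht
  simp only [betaWeight]
  rw [← Real.rpow_natCast, ← mul_assoc, ← Real.rpow_add ht.1]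
  ring_nf

theorem integrableOn_pow_mul_betaWeight {a b : ℝ} (ha : 0 < a) (hb : 0 < b) (e : ℕ) :
    IntegrableOn (fun t => t ^ e * betaWeight a b t) (Set.Icc 0 1) := by
  rw [integrableOn_Icc_iff_integrableOn_Ioc]
  exact (integrableOn_betaWeight (by positivity) hb).congr_fun
    (pow_mul_betaWeight_eqOn a b e).symm measurableSet_Ioc

theorem setIntegral_pow_mul_betaWeight (a b : ℝ) (e : ℕ) :
    ∫ t in Set.Icc (0 : ℝ) 1, t ^ e * betaWeight a b t = betaFn (a + e) b := by
  rw [integral_Icc_eq_integral_Ioc, setIntegral_congr_fun measurableSet_Ioc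
    (pow_mul_betaWeight_eqOn a b e), betaFn, intervalIntegral.integral_of_le zero_le_one]
  rfl

theorem selberg_eq_sum_sign_mul_prod_betaFn {n : ℕ} (m : ℕ) {a b : ℝ} (ha : 0 < a) (hb : 0 < b) :
    selberg n m a b = ∑ σ : Fin (2 * m) → Equiv.Perm (Fin n),
      (∏ s, (Equiv.Perm.sign (σ s) : ℝ)) * ∏ i, betaFn (a + ∑ s, (σ s i : ℕ)) b := by
  have hexpand : ∀ x : Fin n → ℝ,
      vandermonde x ^ (2 * m) * ∏ i, betaWeight a b (x i) = ∑ σ : Fin (2 * m) → Equiv.Perm (Fin n),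
        (∏ s, (Equiv.Perm.sign (σ s) : ℝ)) *
          ∏ i, x i ^ (∑ s, (σ s i : ℕ)) * betaWeight a b (x i) := by
    intro x
    rw [vandermonde_pow_eq_sum, sum_mul]
    simp_rw [mul_assoc, prod_mul_distrib]
  calc selberg n m a b
      = ∫ x in Set.univ.pi fun _ => Set.Icc 0 1, ∑ σ : Fin (2 * m) → Equiv.Perm (Fin n),
          (∏ s, (Equiv.Perm.sign (σ s) : ℝ)) *
            ∏ i, x i ^ (∑ s, (σ s i : ℕ)) * betaWeight a b (x i) :=
        integral_congr_ae (.of_forall hexpand)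
    _ = _ := by
        rw [integral_finsetSum _ fun σ _ => ((IntegrableOn.univ_pi_prod fun i =>
          integrableOn_pow_mul_betaWeight ha hb _).const_mul _)]
        refine sum_congr rfl fun σ _ => ?_
        rw [integral_const_mul, setIntegral_univ_pi_prod _
          fun i t => t ^ (∑ s, (σ s i : ℕ)) * betaWeight a b t]
        simp only [setIntegral_pow_mul_betaWeight]

theorem selberg_hyperdeterminant_general (n k : ℕ)
    (a b : ℝ) (ha : 0 < a) (hb : 0 < b) :
    selberg n k a b =
      (n ! : ℝ) *
        hypDet (fun t : Fin (2 * k) → Fin n => betaFn (a + ∑ s, (t s : ℕ)) b) := by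
  rw [selberg_eq_sum_sign_mul_prod_betaFn k ha hb, hypDet, ← mul_assoc,
    mul_one_div_cancel (by positivity), one_mul]

/-- Hyperdeterminantal representation of Selberg's integral:
`𝒮ₙ(a,b;k) = n! Det(B(a + i₁ + ⋯ + i₂ₖ, b))`. -/
theorem selberg_hyperdeterminant (n k : ℕ) (hn : 1 ≤ n) (hk : 1 ≤ k)
    (a b : ℝ) (ha : 0 < a) (hb : 0 < b) :
    selberg n k a b =
      (n ! : ℝ) *
        hypDet (fun t : Fin (2 * k) → Fin n => betaFn (a + ∑ s, (t s : ℕ)) b) :=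
  selberg_hyperdeterminant_general n k a b ha hb
end

section
/- Expansion of a hyperdeterminant along the first index: Let n ≥ 2 and k ≥ 1 be integers and let M be a hypermatrix of order 2k and dimension n. Then Det(M) = ∑_{0 ≤ i₂,…,i_{2k} ≤ n−1} (−1)^{i₂+⋯+i_{2k}} · M(0, i₂, …, i_{2k}) · Det(M̂), where M̂ is the hypermatrix of order 2k and dimension n−1 obtained from M by deleting the index value 0 from the first slot and the index value i_s from the s-th slot (s = 2,…,2k), each remaining index set enumerated in increasing order. -/
open Nat

/-!
Right-multiplying every permutation of a tuple `σ` by one `τ` multiplies its term in `Det(M)` by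
`sign(τ)^(2k) = 1` and only reorders the product over `i`. Hence the `n!` tuples of an orbit
contribute equally, and `Det(M)` is the plain sum over tuples whose first permutation is the
identity. A permutation of `Fin (n + 2)` is uniquely `0 ↦ p, t.succ ↦ p.succAbove (e t)`, with
sign `(-1)^p · sign e`; in these coordinates such a tuple is `(p, e)` with `p₁ = 0`, `e₁ = 1`,
and its term splits off the factor `(-1)^(Σ p_s) M(p)` times the term of `Det(M̂)` indexed by `e`,
which is again normalized in the first slot.
-/

open Equiv Finset

namespace Fin

variable {n : ℕ}

/-- The permutation `0 ↦ p`, `t.succ ↦ p.succAbove (e t)`. -/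
def succAbovePerm (p : Fin (n + 1)) (e : Perm (Fin n)) : Perm (Fin (n + 1)) :=
  p.cycleRange.symm * Perm.decomposeFin.symm (0, e)

@[simp]
theorem succAbovePerm_apply_zero (p : Fin (n + 1)) (e : Perm (Fin n)) :
    succAbovePerm p e 0 = p := by
  simp [succAbovePerm]

@[simp]
theorem succAbovePerm_apply_succ (p : Fin (n + 1)) (e : Perm (Fin n)) (t : Fin n) :
    succAbovePerm p e t.succ = p.succAbove (e t) := by
  simp [succAbovePerm]

theorem sign_succAbovePerm (p : Fin (n + 1)) (e : Perm (Fin n)) :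
    Perm.sign (succAbovePerm p e) = (-1) ^ (p : ℕ) * Perm.sign e := by
  simp [succAbovePerm, sign_cycleRange]

theorem succAbovePerm_zero_one : succAbovePerm (0 : Fin (n + 1)) 1 = 1 := by
  ext t
  cases t using Fin.cases <;> simp

theorem bijective_succAbovePerm :
    Function.Bijective fun x : Fin (n + 1) × Perm (Fin n) => succAbovePerm x.1 x.2 := by
  refine (Fintype.bijective_iff_injective_and_card _).2 ⟨?_, ?_⟩
  · rintro ⟨p, e⟩ ⟨p', e'⟩ h
    have hp : p = p' := by simpa using congr($h 0)
    subst hp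
    refine Prod.ext rfl (Equiv.ext fun t => p.succAbove_right_injective ?_)
    simpa using congr($h t.succ)
  · rw [Fintype.card_prod, Fintype.card_perm, Fintype.card_perm, Fintype.card_fin,
      Fintype.card_fin, Nat.factorial_succ]

theorem succAbovePerm_eq_one_iff (p : Fin (n + 1)) (e : Perm (Fin n)) :
    succAbovePerm p e = 1 ↔ p = 0 ∧ e = 1 := by
  rw [← succAbovePerm_zero_one, ← Prod.mk.injEq]
  exact (bijective_succAbovePerm (n := n)).injective.eq_iff (a := (p, e)) (b := (0, 1))

theorem bijective_pi_succAbovePerm (ι : Type*) :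
    Function.Bijective fun x : (ι → Fin (n + 1)) × (ι → Perm (Fin n)) =>
      fun s => succAbovePerm (x.1 s) (x.2 s) :=
  ((Equiv.arrowProdEquivProdArrow ι _ _).symm.trans
    (Equiv.piCongrRight fun _ => Equiv.ofBijective _ bijective_succAbovePerm)).bijective

end Fin

section HypDet

variable {m n : ℕ}

noncomputable def hypDetTerm (M : (Fin m → Fin n) → ℝ) (σ : Fin m → Perm (Fin n)) : ℝ :=
  (∏ s, ((Perm.sign (σ s) : ℤ) : ℝ)) * ∏ i, M fun s => σ s i

theorem hypDet_eq_sum_hypDetTerm (M : (Fin m → Fin n) → ℝ) :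
    hypDet M = (1 / (n ! : ℝ)) * ∑ σ, hypDetTerm M σ :=
  rfl

theorem hypDetTerm_mul_const (hm : Even m) (M : (Fin m → Fin n) → ℝ)
    (σ : Fin m → Perm (Fin n)) (τ : Perm (Fin n)) :
    hypDetTerm M (σ * Function.const (Fin m) τ) = hypDetTerm M σ := by
  have hsign : Perm.sign τ ^ m = 1 := by
    obtain ⟨r, rfl⟩ := hm
    rw [← two_mul, pow_mul, Int.units_sq, one_pow]
  have hsigns : ∏ s, ((Perm.sign ((σ * Function.const (Fin m) τ) s) : ℤ) : ℝ) =
      ∏ s, ((Perm.sign (σ s) : ℤ) : ℝ) := by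
    simp only [Pi.mul_apply, Function.const_apply, map_mul, Units.val_mul, Int.cast_mul,
      prod_mul_distrib, prod_const, Finset.card_univ, Fintype.card_fin]
    rw [← Int.cast_pow, ← Units.val_pow_eq_pow_val, hsign, Units.val_one, Int.cast_one, mul_one]
  rw [hypDetTerm, hypDetTerm, hsigns]
  congr 1
  exact Equiv.prod_comp τ fun i => M fun s => σ s i

theorem hypDet_eq_sum_filter_apply_eq_one (hm : Even m) (z : Fin m)
    (M : (Fin m → Fin n) → ℝ) :
    hypDet M = ∑ σ with σ z = 1, hypDetTerm M σ := by
  have hfiber (τ : Perm (Fin n)) :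
      ∑ σ with σ z = τ, hypDetTerm M σ = ∑ σ with σ z = 1, hypDetTerm M σ :=
    (sum_equiv (Equiv.mulRight (Function.const _ τ)) (by simp)
      fun σ _ => (hypDetTerm_mul_const hm M σ τ).symm).symm
  rw [hypDet_eq_sum_hypDetTerm, ← sum_fiberwise univ (fun σ => σ z),
    sum_congr rfl fun τ _ => hfiber τ, sum_const, Finset.card_univ, Fintype.card_perm,
    Fintype.card_fin, nsmul_eq_mul, ← mul_assoc,
    one_div_mul_cancel (by positivity), one_mul]

/-- The hypermatrix `M̂` of the expansion, with the index value `i s` deleted from slot `s`. -/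
noncomputable def hypMinor (M : (Fin m → Fin (n + 1)) → ℝ) (i : Fin m → Fin (n + 1)) :
    (Fin m → Fin n) → ℝ :=
  fun t => M fun s => (i s).succAbove (t s)

theorem hypDetTerm_succAbovePerm (M : (Fin m → Fin (n + 1)) → ℝ) (i : Fin m → Fin (n + 1))
    (e : Fin m → Perm (Fin n)) :
    hypDetTerm M (fun s => (i s).succAbovePerm (e s)) =
      (-1) ^ (∑ s, (i s : ℕ)) * M i * hypDetTerm (hypMinor M i) e := by
  simp only [hypDetTerm, hypMinor, Fin.prod_univ_succ, Fin.sign_succAbovePerm,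
    Fin.succAbovePerm_apply_zero, Fin.succAbovePerm_apply_succ]
  push_cast
  rw [prod_mul_distrib, prod_pow_eq_pow_sum]
  ring

end HypDet

/-- Expansion of a hyperdeterminant along the first index (dimension `n + 2 ≥ 2`):
`Det(M) = ∑_{i₂,…,i₂ₖ} (-1)^{i₂+⋯+i₂ₖ} M(0,i₂,…,i₂ₖ) Det(M̂)`, where `M̂` is
obtained by deleting the index value `0` from the first slot and `i_s` from the
`s`-th slot, each remaining index set enumerated increasingly (via `succAbove`). -/
theorem hypDet_first_index_expansion (n k : ℕ) (hk : 1 ≤ k)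
    (M : (Fin (2 * k) → Fin (n + 2)) → ℝ) :
    hypDet M =
      ∑ i ∈ Finset.univ.filter
          (fun i : Fin (2 * k) → Fin (n + 2) => i ⟨0, by omega⟩ = 0),
        (-1 : ℝ) ^ (∑ s, (i s : ℕ)) * M i *
          hypDet (fun t : Fin (2 * k) → Fin (n + 1) =>
            M fun s => (i s).succAbove (t s)) := by
  set z : Fin (2 * k) := ⟨0, by omega⟩
  have hm : Even (2 * k) := even_two_mul k
  simp_rw [hypDet_eq_sum_filter_apply_eq_one hm z, mul_sum, ← sum_product']
  refine (sum_equiv (Equiv.ofBijective _ (Fin.bijective_pi_succAbovePerm _)) ?_ ?_).symm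
  · simp [Fin.succAbovePerm_eq_one_iff]
  · rintro ⟨i, e⟩ -
    exact (hypDetTerm_succAbovePerm M i e).symm
end
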